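/- arXiv:1907.08810 — 6 statements merged into one kernel-verified Lean document; each statement's English description precedes it below -/
import Mathlib

section
/- With M, h, c₀,…,c₄, the automorphisms σ_I, and the subgroup G = ⟨σ_{{0,1}}, σ_{{2,3}}, σ_{{2,4}}⟩ as in the context, the subgroup of G-invariants M^G equals ℤ·h, the infinite cyclic group generated by h. -/
open scoped Matrix

/-- Basis index for `M = ℤ⁶`: `none ↦ e`, `some i ↦ cᵢ`. -/
abbrev Idx := Option (Fin 5)

/-- `M = ℤ⁶`, the free abelian group on `e, c₀, …, c₄`, as coordinate vectors. -/
abbrev Mlat := Idx → ℤ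

/-- The coordinate vector of `h = 2e − (c₀ + c₁ + c₂ + c₃ + c₄)`. -/
def hvec : Mlat := fun r => match r with | none => 2 | some _ => -1

/-- The coordinate vector of the basis element `cᵢ`. -/
def cvec (i : Fin 5) : Mlat := Pi.single (some i) 1

/-- The matrix of the automorphism `σ_I` of `M = ℤ⁶` (in the basis `e, c₀, …, c₄`):
`σ_I` fixes `h = 2e − Σᵢcᵢ`, sends `cᵢ ↦ h − cᵢ` for `i ∈ I`, fixes `cᵢ` for `i ∉ I`,
and sends `e ↦ e + (|I|/2)·h − Σ_{i∈I} cᵢ`. Columns are the images of the basis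
vectors. -/
def sigmaMat (I : Finset (Fin 5)) : Matrix Idx Idx ℤ :=
  Matrix.of fun r c =>
    match c with
    | none =>
      match r with
      | none => 1 + I.card
      | some j => -((I.card : ℤ) / 2) - (if j ∈ I then 1 else 0)
    | some i =>
      if i ∈ I then
        match r with
        | none => 2
        | some j => if j = i then -2 else -1
      else
        match r with
        | none => 0
        | some j => if j = i then 1 else 0

/-- `σ_{{0,1}}` as an automorphism (invertible matrix) of `M`. -/
def g01 : (Matrix Idx Idx ℤ)ˣ := ⟨sigmaMat {0, 1}, sigmaMat {0, 1}, by decide, by decide⟩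

/-- `σ_{{2,3}}` as an automorphism of `M`. -/
def g23 : (Matrix Idx Idx ℤ)ˣ := ⟨sigmaMat {2, 3}, sigmaMat {2, 3}, by decide, by decide⟩

/-- `σ_{{2,4}}` as an automorphism of `M`. -/
def g24 : (Matrix Idx Idx ℤ)ˣ := ⟨sigmaMat {2, 4}, sigmaMat {2, 4}, by decide, by decide⟩

/-- `G = ⟨σ_{{0,1}}, σ_{{2,3}}, σ_{{2,4}}⟩ ⊆ Aut(M)`. -/
def Ggrp : Subgroup (Matrix Idx Idx ℤ)ˣ := Subgroup.closure {g01, g23, g24}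


private lemma mulVec_eval (A : Matrix Idx Idx ℤ) (v : Mlat) (r : Idx) :
    (A *ᵥ v) r = A r none * v none + A r (some 0) * v (some 0) + A r (some 1) * v (some 1)
      + A r (some 2) * v (some 2) + A r (some 3) * v (some 3) + A r (some 4) * v (some 4) := by
  simp [Matrix.mulVec, dotProduct, Fintype.sum_option, Fin.sum_univ_five]
  ring

/-- The invariants `M^G` form the infinite cyclic subgroup `ℤ·h` generated by `h`. -/
theorem invariants_eq_int_mul_h :
    {v : Mlat | ∀ u ∈ Ggrp, (u : Matrix Idx Idx ℤ) *ᵥ v = v} =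
      {v : Mlat | ∃ n : ℤ, v = n • hvec} := by
  ext v
  simp only [Set.mem_setOf_eq]
  constructor
  · intro hv
    have h1 := hv g01 (Subgroup.subset_closure (by simp [Set.mem_insert_iff]))
    have h2 := hv g23 (Subgroup.subset_closure (by simp [Set.mem_insert_iff]))
    have h3 := hv g24 (Subgroup.subset_closure (by simp [Set.mem_insert_iff]))
    refine ⟨-v (some 0), ?_⟩
    have e1n := congrFun h1 none
    have e10 := congrFun h1 (some 0)
    have e2n := congrFun h2 none
    have e22 := congrFun h2 (some 2)
    have e3n := congrFun h3 none
    have e32 := congrFun h3 (some 2)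
    rw [mulVec_eval] at e1n e10 e2n e22 e3n e32
    simp only [g01, g23, g24, sigmaMat, Matrix.of_apply] at e1n e10 e2n e22 e3n e32
    norm_num (config := { decide := true }) [Finset.mem_insert, Finset.mem_singleton,
      Fin.ext_iff] at e1n e10 e2n e22 e3n e32
    funext r
    match r with
    | none => simp [hvec]; omega
    | some 0 => simp [hvec]
    | some 1 => simp [hvec]; omega
    | some 2 => simp [hvec]; omega
    | some 3 => simp [hvec]; omega
    | some 4 => simp [hvec]; omega
  · rintro ⟨n, rfl⟩ u hu
    have key : ∀ g ∈ ({g01, g23, g24} : Set (Matrix Idx Idx ℤ)ˣ),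
        (g : Matrix Idx Idx ℤ) *ᵥ hvec = hvec := by
      rintro g (rfl | rfl | rfl) <;> decide
    have fix : (u : Matrix Idx Idx ℤ) *ᵥ hvec = hvec := by
      refine Subgroup.closure_induction (k := {g01, g23, g24})
        (p := fun g _ => (g : Matrix Idx Idx ℤ) *ᵥ hvec = hvec) key ?_ ?_ ?_ hu
      · simp
      · intro a b _ _ ha hb
        rw [Units.val_mul, ← Matrix.mulVec_mulVec, hb, ha]
      · intro a _ ha
        have : (↑a⁻¹ : Matrix Idx Idx ℤ) *ᵥ ((a : Matrix Idx Idx ℤ) *ᵥ hvec) = hvec := by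
          rw [Matrix.mulVec_mulVec, ← Units.val_mul, inv_mul_cancel, Units.val_one,
            Matrix.one_mulVec]
        rwa [ha] at this
    rw [Matrix.mulVec_smul, fix]
end

section
/- With M, h, c₀,…,c₄, the automorphisms σ_I, and the subgroup G = ⟨σ_{{0,1}}, σ_{{2,3}}, σ_{{2,4}}⟩ as in the context, the subgroup of G-invariants (M/2M)^G of the 𝔽₂-vector space M/2M is exactly the subgroup generated by the classes of h and of c₀ + c₁; in particular (M/2M)^G has order 4. -/
open scoped Matrix

/-- The class of `h` in `M/2M = (ℤ/2ℤ)⁶`. -/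
def hbar : Idx → ZMod 2 := fun r => ((hvec r : ℤ) : ZMod 2)

/-- The class of `c₀ + c₁` in `M/2M`. -/
def c01bar : Idx → ZMod 2 := fun r => (((cvec 0 + cvec 1) r : ℤ) : ZMod 2)

section Aux

/-- Reduction mod 2 of a unit matrix, as a function. -/
def phi2 (u : (Matrix Idx Idx ℤ)ˣ) : Matrix Idx Idx (ZMod 2) :=
  (u : Matrix Idx Idx ℤ).map (Int.cast : ℤ → ZMod 2)

lemma phi2_mul (u v : (Matrix Idx Idx ℤ)ˣ) : phi2 (u * v) = phi2 u * phi2 v :=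
  Matrix.map_mul (f := Int.castRingHom (ZMod 2))

lemma phi2_one : phi2 1 = 1 :=
  Matrix.map_one (Int.castRingHom (ZMod 2)) (map_zero _) (map_one _)

lemma invariant_iff (w : Idx → ZMod 2) :
    (∀ u ∈ Ggrp, ((u : Matrix Idx Idx ℤ).map (Int.cast : ℤ → ZMod 2)) *ᵥ w = w) ↔
      (phi2 g01 *ᵥ w = w ∧ phi2 g23 *ᵥ w = w ∧ phi2 g24 *ᵥ w = w) := by
  constructor
  · intro H
    refine ⟨H _ ?_, H _ ?_, H _ ?_⟩ <;>
      exact Subgroup.subset_closure (by simp)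
  · rintro ⟨h1, h2, h3⟩ u hu
    show phi2 u *ᵥ w = w
    induction hu using Subgroup.closure_induction with
    | mem x hx =>
        rcases hx with hx | hx | hx <;> subst hx <;> assumption
    | one => simp [phi2_one]
    | mul x y hx hy ihx ihy => rw [phi2_mul, ← Matrix.mulVec_mulVec, ihy, ihx]
    | inv x hx ih =>
        have h1 : phi2 x⁻¹ * phi2 x = 1 := by rw [← phi2_mul, inv_mul_cancel, phi2_one]
        calc phi2 x⁻¹ *ᵥ w = phi2 x⁻¹ *ᵥ (phi2 x *ᵥ w) := by rw [ih]
        _ = (phi2 x⁻¹ * phi2 x) *ᵥ w := by rw [Matrix.mulVec_mulVec]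
        _ = w := by rw [h1, Matrix.one_mulVec]

end Aux

/-- The invariants `(M/2M)^G` are exactly the subgroup generated by the classes of
`h` and of `c₀ + c₁`; in particular `(M/2M)^G` has order 4. -/
theorem invariants_mod_two :
    ({w : Idx → ZMod 2 |
        ∀ u ∈ Ggrp, ((u : Matrix Idx Idx ℤ).map (Int.cast : ℤ → ZMod 2)) *ᵥ w = w} =
      {w : Idx → ZMod 2 | ∃ α β : ZMod 2, w = α • hbar + β • c01bar}) ∧
    ({w : Idx → ZMod 2 |
        ∀ u ∈ Ggrp, ((u : Matrix Idx Idx ℤ).map (Int.cast : ℤ → ZMod 2)) *ᵥ w = w}).ncard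
      = 4 := by
  have key : ∀ w : Idx → ZMod 2,
      (∀ u ∈ Ggrp, ((u : Matrix Idx Idx ℤ).map (Int.cast : ℤ → ZMod 2)) *ᵥ w = w) ↔
        (phi2 g01 *ᵥ w = w ∧ phi2 g23 *ᵥ w = w ∧ phi2 g24 *ᵥ w = w) := invariant_iff
  have hset : {w : Idx → ZMod 2 |
        ∀ u ∈ Ggrp, ((u : Matrix Idx Idx ℤ).map (Int.cast : ℤ → ZMod 2)) *ᵥ w = w} =
      {w : Idx → ZMod 2 | ∃ α β : ZMod 2, w = α • hbar + β • c01bar} := by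
    ext w
    rw [Set.mem_setOf_eq, Set.mem_setOf_eq, key w]
    revert w; decide
  refine ⟨hset, ?_⟩
  rw [hset]
  have hfin : {w : Idx → ZMod 2 | ∃ α β : ZMod 2, w = α • hbar + β • c01bar} =
      ↑({hbar + c01bar, hbar, c01bar, 0} : Finset (Idx → ZMod 2)) := by
    ext w; simp only [Finset.coe_insert, Set.mem_setOf_eq]; revert w; decide
  rw [hfin, Set.ncard_coe_finset]
  decide
end

section
/- With M, h, c₀,…,c₄, the automorphisms σ_I, and the subgroup G = ⟨σ_{{0,1}}, σ_{{2,3}}, σ_{{2,4}}⟩ as in the context, the first group cohomology H¹(G, M) of G with coefficients in the G-module M is isomorphic to ℤ/2ℤ. -/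
open scoped Matrix

/-- The tautological representation of `G` on `M = ℤ⁶`. -/
noncomputable def rhoG : Representation ℤ (↥Ggrp) Mlat :=
  (Matrix.toLinAlgEquiv'.toAlgHom.toMonoidHom.comp (Units.coeHom (Matrix Idx Idx ℤ))).comp
    Ggrp.subtype

/-- `M` as a `ℤ`-linear representation of `G`. -/
noncomputable def Mrep : Rep ℤ (↥Ggrp) := Rep.of rhoG

/-!
Write `a = σ₀₁`, `b = σ₂₃`, `c = σ₂₄`. Since `ab = σ_{0123}` and `v ↦ v_{c₀} + v_{c₂} mod 2` kills
`(ab - 1)M`, the parity of `f(ab)_{c₀} + f(ab)_{c₂}` is an invariant of the class of a cocycle `f`.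
If it is even, `f` is normalised in three steps: `H¹(⟨a⟩, M) = 0` makes `f(a) = 0`; then `f(b)`
lies in `M^a`, where the parity condition is exactly what makes it `(b - 1)m` with `m ∈ M^a`;
finally `f(c)` lies in `M^{⟨a,b⟩} = ℤh ⊕ ℤc₄`, on which `c` permutes `c₄` and `h - c₄`, so it is
`(c - 1)m` with `m ∈ M^{⟨a,b⟩}`. The class with odd parity is half the coboundary of `c₀ + c₁`.
-/

namespace groupCohomology

universe u

variable {k G : Type u} [CommRing k] [Group G] {A : Rep k G}

def d₀₁Cocycle (m : A) : cocycles₁ A := ⟨d₀₁ A m, d₀₁_apply_mem_cocycles₁ m⟩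

lemma d₀₁Cocycle_apply (m : A) (g : G) : d₀₁Cocycle m g = A.ρ g m - m := rfl

lemma cocycles₁_map_of_mul_self_eq_one (f : cocycles₁ A) {g : G} (hg : g * g = 1) :
    A.ρ g (f g) = -f g := by
  simpa [inv_eq_of_mul_eq_one_right hg] using cocycles₁_map_inv f g

lemma cocycles₁_map_of_commute (f : cocycles₁ A) {g h : G} (hgh : Commute g h) (hg : f g = 0) :
    A.ρ g (f h) = f h := by
  have hcoc := (mem_cocycles₁_iff f).1 f.2
  have := hcoc g h
  rwa [hgh.eq, hcoc h g, hg, map_zero, zero_add, add_zero, eq_comm] at this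

def cocycles₁.ker (f : cocycles₁ A) : Subgroup G where
  carrier := {g | f g = 0}
  one_mem' := cocycles₁_map_one f
  mul_mem' {g h} (hg : f g = 0) (hh : f h = 0) := show f (g * h) = 0 by
    rw [(mem_cocycles₁_iff f).1 f.2, hg, hh, map_zero, add_zero]
  inv_mem' {g} (hg : f g = 0) := show f g⁻¹ = 0 by
    have := cocycles₁_map_inv f g⁻¹
    rwa [inv_inv, hg, map_zero, eq_comm, neg_eq_zero] at this

lemma cocycles₁_ext_of_closure {S : Set G} (hS : Subgroup.closure S = ⊤) {f₁ f₂ : cocycles₁ A}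
    (h : ∀ s ∈ S, f₁ s = f₂ s) : f₁ = f₂ := by
  have hle : Subgroup.closure S ≤ cocycles₁.ker (f₁ - f₂) :=
    (Subgroup.closure_le _).2 fun s hs => sub_eq_zero.2 (h s hs)
  ext g
  exact sub_eq_zero.1 (hle (hS ▸ Subgroup.mem_top g))

lemma mem_coboundaries₁_of_closure {S : Set G} (hS : Subgroup.closure S = ⊤) (f : cocycles₁ A)
    (m : A) (h : ∀ s ∈ S, f s = A.ρ s m - m) : ⇑f ∈ coboundaries₁ A := by
  rw [cocycles₁_ext_of_closure hS (f₁ := f) (f₂ := d₀₁Cocycle m) h]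
  exact ⟨m, rfl⟩

lemma mem_coboundaries₁_of_sub_d₀₁Cocycle (f : cocycles₁ A) (m : A)
    (h : ⇑(f - d₀₁Cocycle m) ∈ coboundaries₁ A) : ⇑f ∈ coboundaries₁ A := by
  have hsum := add_mem h ⟨m, rfl⟩
  rwa [show ⇑(f - d₀₁Cocycle m) = ⇑f - d₀₁ A m from rfl, sub_add_cancel] at hsum

lemma exists_cocycles₁_smul_eq {r : k} (hr : IsSMulRegular A r) {S : Set G}
    (hS : Subgroup.closure S = ⊤) (v : A) (hv : ∀ s ∈ S, ∃ u, A.ρ s v - v = r • u) :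
    ∃ f : cocycles₁ A, ∀ g, r • f g = A.ρ g v - v := by
  let K : Subgroup G :=
    { carrier := {g | ∃ u, A.ρ g v - v = r • u}
      one_mem' := ⟨0, by simp⟩
      mul_mem' := by
        rintro g h ⟨u, hu⟩ ⟨w, hw⟩
        refine ⟨A.ρ g w + u, ?_⟩
        rw [map_mul, Module.End.mul_apply, smul_add, ← map_smul, ← hw, ← hu, map_sub]
        abel
      inv_mem' := by
        rintro g ⟨u, hu⟩
        refine ⟨-A.ρ g⁻¹ u, ?_⟩
        rw [smul_neg, ← map_smul, ← hu, map_sub, ← Module.End.mul_apply, ← map_mul,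
          inv_mul_cancel, map_one, Module.End.one_apply, neg_sub] }
  have hK : ∀ g, ∃ u, A.ρ g v - v = r • u := fun g =>
    (Subgroup.closure_le K).2 hv (hS ▸ Subgroup.mem_top g)
  choose u hu using hK
  refine ⟨⟨u, (mem_cocycles₁_iff u).2 fun g h => hr ?_⟩, fun g => (hu g).symm⟩
  simp only [smul_add, ← map_smul, ← hu, map_mul, Module.End.mul_apply, map_sub]
  abel

noncomputable def H1LinearEquivOfKer {B : Type*} [AddCommGroup B] [Module k B]
    (φ : cocycles₁ A →ₗ[k] B) (hφ : Function.Surjective φ)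
    (hker : ∀ f, φ f = 0 ↔ ⇑f ∈ coboundaries₁ A) : H1 A ≃ₗ[k] B :=
  have hπ : Function.Surjective (H1π A).hom := (ModuleCat.epi_iff_surjective _).1 inferInstance
  have hkerπ : LinearMap.ker (H1π A).hom = LinearMap.ker φ := by
    ext f
    simp only [LinearMap.mem_ker, hker]
    exact H1π_eq_zero_iff f
  ((H1π A).hom.quotKerEquivOfSurjective hπ).symm ≪≫ₗ Submodule.quotEquivOfEq _ _ hkerπ ≪≫ₗ
    φ.quotKerEquivOfSurjective hφ

end groupCohomology

open groupCohomology

def σ₀₁ : Ggrp := ⟨g01, Subgroup.subset_closure (by simp)⟩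

def σ₂₃ : Ggrp := ⟨g23, Subgroup.subset_closure (by simp)⟩

def σ₂₄ : Ggrp := ⟨g24, Subgroup.subset_closure (by simp)⟩

lemma closure_σ_eq_top : Subgroup.closure ({σ₀₁, σ₂₃, σ₂₄} : Set Ggrp) = ⊤ := by
  have hpre : ({σ₀₁, σ₂₃, σ₂₄} : Set Ggrp) = Subtype.val ⁻¹' {g01, g23, g24} := by
    ext g
    simp [σ₀₁, σ₂₃, σ₂₄, Subtype.ext_iff]
  rw [hpre]
  exact Subgroup.closure_closure_coe_preimage

lemma Ggrp_ext {g h : Ggrp} (hgh : ((g : (Matrix Idx Idx ℤ)ˣ) : Matrix Idx Idx ℤ) =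
    ((h : (Matrix Idx Idx ℤ)ˣ) : Matrix Idx Idx ℤ)) : g = h :=
  Subtype.ext (Units.ext hgh)

lemma σ₀₁_mul_self : σ₀₁ * σ₀₁ = 1 :=
  Ggrp_ext (show sigmaMat {0, 1} * sigmaMat {0, 1} = 1 by decide)

lemma σ₂₃_mul_self : σ₂₃ * σ₂₃ = 1 :=
  Ggrp_ext (show sigmaMat {2, 3} * sigmaMat {2, 3} = 1 by decide)

lemma σ₂₄_mul_self : σ₂₄ * σ₂₄ = 1 :=
  Ggrp_ext (show sigmaMat {2, 4} * sigmaMat {2, 4} = 1 by decide)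

lemma commute_σ₀₁_σ₂₃ : Commute σ₀₁ σ₂₃ :=
  Ggrp_ext (show sigmaMat {0, 1} * sigmaMat {2, 3} = sigmaMat {2, 3} * sigmaMat {0, 1} by decide)

lemma commute_σ₀₁_σ₂₄ : Commute σ₀₁ σ₂₄ :=
  Ggrp_ext (show sigmaMat {0, 1} * sigmaMat {2, 4} = sigmaMat {2, 4} * sigmaMat {0, 1} by decide)

lemma commute_σ₂₃_σ₂₄ : Commute σ₂₃ σ₂₄ :=
  Ggrp_ext (show sigmaMat {2, 3} * sigmaMat {2, 4} = sigmaMat {2, 4} * sigmaMat {2, 3} by decide)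

lemma Mlat_ext_iff {v w : Mlat} : v = w ↔ v none = w none ∧ v (some 0) = w (some 0) ∧
    v (some 1) = w (some 1) ∧ v (some 2) = w (some 2) ∧ v (some 3) = w (some 3) ∧
    v (some 4) = w (some 4) := by
  simp [funext_iff, Option.forall, Fin.forall_fin_succ]

lemma exists_sigmaMat01_sub_eq (v : Mlat) (hv : sigmaMat {0, 1} *ᵥ v = -v) :
    ∃ m, sigmaMat {0, 1} *ᵥ m - m = v := by
  refine ⟨Pi.single none (v (some 2) - v (some 0)) +
    Pi.single (some 1) (v (some 0) - 2 * v (some 2)), ?_⟩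
  rw [Mlat_ext_iff] at hv ⊢
  simp [sigmaMat, Matrix.mulVec, dotProduct, Fintype.sum_option, Fin.sum_univ_five] at hv ⊢
  omega

def parity02 : Mlat →ₗ[ℤ] ZMod 2 :=
  (Int.castAddHom (ZMod 2)).toIntLinearMap ∘ₗ
    (LinearMap.proj (R := ℤ) (φ := fun _ : Idx => ℤ) (some 0) + LinearMap.proj (some 2))

lemma parity02_eq_zero_iff (v : Mlat) : parity02 v = 0 ↔ 2 ∣ v (some 0) + v (some 2) :=
  ZMod.intCast_zmod_eq_zero_iff_dvd _ 2

lemma exists_sigmaMat23_sub_eq (v : Mlat) (h01 : sigmaMat {0, 1} *ᵥ v = v)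
    (h23 : sigmaMat {2, 3} *ᵥ v = -v) (hv : parity02 v = 0) :
    ∃ m, sigmaMat {0, 1} *ᵥ m = m ∧ sigmaMat {2, 3} *ᵥ m - m = v := by
  obtain ⟨k, hk⟩ := (parity02_eq_zero_iff v).1 hv
  refine ⟨Pi.single (some 2) (v (some 0) - k) + Pi.single (some 3) (k - 2 * v (some 0)), ?_⟩
  simp only [Mlat_ext_iff] at h01 h23 ⊢
  simp [sigmaMat, Matrix.mulVec, dotProduct, Fintype.sum_option, Fin.sum_univ_five] at h01 h23 ⊢
  omega

lemma exists_sigmaMat24_sub_eq (v : Mlat) (h01 : sigmaMat {0, 1} *ᵥ v = v)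
    (h23 : sigmaMat {2, 3} *ᵥ v = v) (h24 : sigmaMat {2, 4} *ᵥ v = -v) :
    ∃ m, sigmaMat {0, 1} *ᵥ m = m ∧ sigmaMat {2, 3} *ᵥ m = m ∧ sigmaMat {2, 4} *ᵥ m - m = v := by
  refine ⟨Pi.single (some 4) (-v (some 0)), ?_⟩
  simp only [Mlat_ext_iff] at h01 h23 h24 ⊢
  simp [sigmaMat, Matrix.mulVec, dotProduct, Fintype.sum_option, Fin.sum_univ_five] at h01 h23 h24 ⊢
  omega

lemma parity02_sigmaMat01_sigmaMat23_sub (m : Mlat) :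
    parity02 (sigmaMat {0, 1} *ᵥ (sigmaMat {2, 3} *ᵥ m) - m) = 0 := by
  rw [Matrix.mulVec_mulVec,
    show sigmaMat {0, 1} * sigmaMat {2, 3} = sigmaMat {0, 1, 2, 3} by decide, parity02_eq_zero_iff]
  simp [sigmaMat, Matrix.mulVec, dotProduct, Fintype.sum_option, Fin.sum_univ_five]
  omega

noncomputable def cocycleParity : cocycles₁ Mrep →ₗ[ℤ] ZMod 2 :=
  parity02 ∘ₗ LinearMap.proj (σ₀₁ * σ₂₃) ∘ₗ (cocycles₁ Mrep).subtype

lemma cocycleParity_apply (f : cocycles₁ Mrep) :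
    cocycleParity f = parity02 (f (σ₀₁ * σ₂₃)) := rfl

lemma cocycleParity_d₀₁Cocycle (m : Mrep) : cocycleParity (d₀₁Cocycle m) = 0 := by
  rw [cocycleParity_apply, d₀₁Cocycle_apply, map_mul, Module.End.mul_apply]
  exact parity02_sigmaMat01_sigmaMat23_sub m

lemma cocycleParity_sub_d₀₁Cocycle (f : cocycles₁ Mrep) (m : Mrep) :
    cocycleParity (f - d₀₁Cocycle m) = cocycleParity f := by
  rw [map_sub, cocycleParity_d₀₁Cocycle, sub_zero]

lemma cocycleParity_eq_zero_of_mem_coboundaries₁ (f : cocycles₁ Mrep)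
    (hf : ⇑f ∈ coboundaries₁ Mrep) : cocycleParity f = 0 := by
  obtain ⟨m, hm⟩ := hf
  rw [show f = d₀₁Cocycle m from Subtype.ext hm.symm]
  exact cocycleParity_d₀₁Cocycle m

lemma mem_coboundaries₁_of_cocycleParity_eq_zero (f : cocycles₁ Mrep)
    (hf : cocycleParity f = 0) : ⇑f ∈ coboundaries₁ Mrep := by
  obtain ⟨m₁, hm₁⟩ : ∃ m : Mrep, Mrep.ρ σ₀₁ m - m = f σ₀₁ :=
    exists_sigmaMat01_sub_eq (f σ₀₁) (cocycles₁_map_of_mul_self_eq_one f σ₀₁_mul_self)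
  set f₁ := f - d₀₁Cocycle m₁
  have hf₁a : f₁ σ₀₁ = 0 := sub_eq_zero.2 hm₁.symm
  have hf₁b : Mrep.ρ σ₀₁ (f₁ σ₂₃) = f₁ σ₂₃ := cocycles₁_map_of_commute f₁ commute_σ₀₁_σ₂₃ hf₁a
  have hf₁par : parity02 (f₁ σ₂₃) = 0 := by
    have hab := (mem_cocycles₁_iff f₁).1 f₁.2 σ₀₁ σ₂₃
    rw [hf₁b, hf₁a, add_zero] at hab
    rw [← hab, ← cocycleParity_apply, cocycleParity_sub_d₀₁Cocycle, hf]
  obtain ⟨m₂, hm₂a, hm₂b⟩ : ∃ m : Mrep, Mrep.ρ σ₀₁ m = m ∧ Mrep.ρ σ₂₃ m - m = f₁ σ₂₃ :=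
    exists_sigmaMat23_sub_eq (f₁ σ₂₃) hf₁b
      (cocycles₁_map_of_mul_self_eq_one f₁ σ₂₃_mul_self) hf₁par
  set f₂ := f₁ - d₀₁Cocycle m₂
  have hf₂a : f₂ σ₀₁ = 0 := by
    show f₁ σ₀₁ - (Mrep.ρ σ₀₁ m₂ - m₂) = 0
    rw [hf₁a, hm₂a, sub_self, sub_zero]
  have hf₂b : f₂ σ₂₃ = 0 := sub_eq_zero.2 hm₂b.symm
  obtain ⟨m₃, hm₃a, hm₃b, hm₃c⟩ : ∃ m : Mrep, Mrep.ρ σ₀₁ m = m ∧ Mrep.ρ σ₂₃ m = m ∧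
      Mrep.ρ σ₂₄ m - m = f₂ σ₂₄ :=
    exists_sigmaMat24_sub_eq (f₂ σ₂₄) (cocycles₁_map_of_commute f₂ commute_σ₀₁_σ₂₄ hf₂a)
      (cocycles₁_map_of_commute f₂ commute_σ₂₃_σ₂₄ hf₂b)
      (cocycles₁_map_of_mul_self_eq_one f₂ σ₂₄_mul_self)
  refine mem_coboundaries₁_of_sub_d₀₁Cocycle f m₁ <| mem_coboundaries₁_of_sub_d₀₁Cocycle f₁ m₂ <|
    mem_coboundaries₁_of_closure closure_σ_eq_top f₂ m₃ ?_
  rintro s (rfl | rfl | rfl)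
  · rw [hf₂a, hm₃a, sub_self]
  · rw [hf₂b, hm₃b, sub_self]
  · exact hm₃c.symm

lemma exists_cocycleParity_eq_one : ∃ f, cocycleParity f = 1 := by
  have hreg : IsSMulRegular Mrep (2 : ℤ) := smul_right_injective Mlat two_ne_zero
  let v : Mrep := (cvec 0 + cvec 1 : Mlat)
  have hgen : ∀ s ∈ ({σ₀₁, σ₂₃, σ₂₄} : Set Ggrp), ∃ u : Mrep, Mrep.ρ s v - v = (2 : ℤ) • u := by
    rintro s (rfl | rfl | rfl)
    · exact ⟨(hvec - cvec 0 - cvec 1 : Mlat), (by decide : sigmaMat {0, 1} *ᵥ (cvec 0 + cvec 1) -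
        (cvec 0 + cvec 1) = (2 : ℤ) • (hvec - cvec 0 - cvec 1))⟩
    · exact ⟨(0 : Mlat), (by decide : sigmaMat {2, 3} *ᵥ (cvec 0 + cvec 1) -
        (cvec 0 + cvec 1) = (2 : ℤ) • 0)⟩
    · exact ⟨(0 : Mlat), (by decide : sigmaMat {2, 4} *ᵥ (cvec 0 + cvec 1) -
        (cvec 0 + cvec 1) = (2 : ℤ) • 0)⟩
  obtain ⟨f, hf⟩ := exists_cocycles₁_smul_eq hreg closure_σ_eq_top v hgen
  have hab : f (σ₀₁ * σ₂₃) = (hvec - cvec 0 - cvec 1 : Mlat) :=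
    hreg <| (hf _).trans (by decide : (sigmaMat {0, 1} * sigmaMat {2, 3}) *ᵥ (cvec 0 + cvec 1) -
      (cvec 0 + cvec 1) = (2 : ℤ) • (hvec - cvec 0 - cvec 1))
  refine ⟨f, ?_⟩
  rw [cocycleParity_apply, hab]
  decide

lemma cocycleParity_surjective : Function.Surjective cocycleParity := by
  obtain ⟨f, hf⟩ := exists_cocycleParity_eq_one
  intro t
  fin_cases t
  exacts [⟨0, map_zero _⟩, ⟨f, hf⟩]

/-- The first group cohomology `H¹(G, M)` is isomorphic to `ℤ/2ℤ`. -/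
theorem h1_iso_zmod_two : Nonempty (groupCohomology.H1 Mrep ≃+ ZMod 2) :=
  ⟨(H1LinearEquivOfKer cocycleParity cocycleParity_surjective fun f =>
    ⟨mem_coboundaries₁_of_cocycleParity_eq_zero f,
      cocycleParity_eq_zero_of_mem_coboundaries₁ f⟩).toAddEquiv⟩
end

section
/- Let F be a field of characteristic different from 2 containing elements i and s with i² = −1 and s² = a for some nonzero a ∈ F. Let b, c, x₀, x₁, x₂, x₄ ∈ F satisfy: bc ≠ 0, x₀ + x₁ ≠ 0, ax₀² + x₂² ≠ 0, ix₁ + x₂ ≠ 0, and the relation ax₀² + bx₁² + x₂² + cx₄² = 0. Set f = (2aix₀ + 2sx₂)(2ix₁ + 2x₂)/(x₀+x₁)² and g = (−2aix₀ + 2sx₂)(2ix₁ + 2x₂)/(x₀+x₁)² (both are nonzero). Then in the Brauer group Br F, [(bc, f)_F] + [(bc, g)_F] = [(c, b)_F]. -/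
open scoped Quaternion TensorProduct

/-!
In `(c, b)` the elements `u = ι k` (with `ι² = -1`) and `v = t (x₄ i + x₁ j)` anticommute, with
`u² = bc` and `v² = t² (b x₁² + c x₄²) = fg` for a suitable `t`; in `M₂(F)` the matrices
`E = diag(1, -1)` and `N = [[0, g], [1, 0]]` anticommute, with `E² = 1`, `N² = g`. Inside
`(c, b) ⊗ M₂(F)` the pairs `(u ⊗ 1, v ⊗ g⁻¹N)` and `(u ⊗ E, 1 ⊗ N)` are commuting quaternion bases
of types `(bc, f)` and `(bc, g)`, so they define a map `(bc, f) ⊗ (bc, g) → (c, b) ⊗ M₂(F)`. Its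
image contains `u ⊗ 1, v ⊗ 1, 1 ⊗ E, 1 ⊗ N`, which generate the target, because a quaternion
basis with nonzero parameters is linearly independent (averaging over conjugation by `i, j, k`
extracts the real part). Both sides have dimension 16, so the map is an isomorphism.
-/

namespace QuaternionAlgebra

theorem range_le_of_mem {R A : Type*} [CommRing R] [Ring A] [Algebra R A] {c₁ c₂ c₃ : R}
    {S : Subalgebra R A} (f : ℍ[R,c₁,c₂,c₃] →ₐ[R] A)
    (hi : f (Basis.self R).i ∈ S) (hj : f (Basis.self R).j ∈ S) : f.range ≤ S := by
  rw [← lift.apply_symm_apply f, lift_apply, Basis.range_liftHom, Algebra.adjoin_le_iff]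
  rintro _ (rfl | rfl | rfl)
  · exact hi
  · exact hj
  · change f (Basis.self R).k ∈ S
    rw [← (Basis.self R).i_mul_j, map_mul]
    exact mul_mem hi hj

theorem algebraMap_four_mul_re {F : Type*} [Field F] {c₁ c₂ : F} (hc₁ : c₁ ≠ 0) (hc₂ : c₂ ≠ 0)
    (x : ℍ[F,c₁,c₂]) :
    algebraMap F ℍ[F,c₁,c₂] (4 * x.re) =
      x + c₁⁻¹ • ((Basis.self F).i * x * (Basis.self F).i)
        + c₂⁻¹ • ((Basis.self F).j * x * (Basis.self F).j)
        - (c₁ * c₂)⁻¹ • ((Basis.self F).k * x * (Basis.self F).k) := by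
  ext <;> simp <;> field_simp <;> ring

namespace Basis

section CommRing

variable {R A : Type*} [CommRing R] [Ring A] [Algebra R A] {c₁ c₂ c₃ d₁ d₂ d₃ : R}

theorem commute_liftHom_of_commute (q : Basis A c₁ c₂ c₃) {z : A} (hi : Commute q.i z)
    (hj : Commute q.j z) (x : ℍ[R,c₁,c₂,c₃]) : Commute (q.liftHom x) z := by
  have hk : Commute q.k z := q.i_mul_j ▸ hi.mul_left hj
  have mem_iff (w : A) : w ∈ Subalgebra.centralizer R {z} ↔ Commute w z := by
    simp [Subalgebra.mem_centralizer_iff, Commute, SemiconjBy, eq_comm]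
  have hrange : q.liftHom.range ≤ Subalgebra.centralizer R {z} := by
    rw [range_liftHom, Algebra.adjoin_le_iff]
    rintro _ (rfl | rfl | rfl) <;> rwa [SetLike.mem_coe, mem_iff]
  exact (mem_iff _).mp (hrange ⟨x, rfl⟩)

theorem commute_liftHom (p : Basis A c₁ c₂ c₃) (q : Basis A d₁ d₂ d₃)
    (hii : Commute p.i q.i) (hij : Commute p.i q.j) (hji : Commute p.j q.i)
    (hjj : Commute p.j q.j) (x : ℍ[R,c₁,c₂,c₃]) (y : ℍ[R,d₁,d₂,d₃]) :
    Commute (p.liftHom x) (q.liftHom y) :=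
  p.commute_liftHom_of_commute (q.commute_liftHom_of_commute hii.symm hij.symm y).symm
    (q.commute_liftHom_of_commute hji.symm hjj.symm y).symm x

@[simp]
theorem liftHom_self_i (q : Basis A c₁ c₂ c₃) : q.liftHom (Basis.self R).i = q.i := by
  simp [lift]

@[simp]
theorem liftHom_self_j (q : Basis A c₁ c₂ c₃) : q.liftHom (Basis.self R).j = q.j := by
  simp [lift]

theorem range_le_of_surjective {B : Type*} [Ring B] [Algebra R B] {q : Basis A c₁ c₂ c₃}
    (hq : Function.Surjective q.liftHom) (f : A →ₐ[R] B) {S : Subalgebra R B} (hi : f q.i ∈ S)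
    (hj : f q.j ∈ S) : f.range ≤ S := by
  rintro _ ⟨a, rfl⟩
  obtain ⟨x, rfl⟩ := hq a
  refine range_le_of_mem (f.comp q.liftHom) ?_ ?_ ⟨x, rfl⟩
  · rwa [AlgHom.comp_apply, liftHom_self_i]
  · rwa [AlgHom.comp_apply, liftHom_self_j]

end CommRing

section Field

variable {F A : Type*} [Field F] [Ring A] [Algebra F A] {c₁ c₂ : F}

theorem re_eq_zero_of_liftHom_eq_zero [Nontrivial A] (h2 : (2 : F) ≠ 0) (hc₁ : c₁ ≠ 0)
    (hc₂ : c₂ ≠ 0) (q : Basis A c₁ 0 c₂) {x : ℍ[F,c₁,c₂]} (hx : q.liftHom x = 0) :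
    x.re = 0 := by
  have h := congrArg q.liftHom (algebraMap_four_mul_re hc₁ hc₂ x)
  simp only [AlgHom.commutes, map_add, map_sub, map_smul, map_mul, hx, mul_zero, zero_mul,
    smul_zero, add_zero, sub_zero] at h
  rw [← map_mul, map_eq_zero_iff _ (algebraMap F A).injective] at h
  have h4 : (4 : F) ≠ 0 := by
    rw [show (4 : F) = 2 * 2 by norm_num]
    exact mul_ne_zero h2 h2
  exact (mul_eq_zero.mp h).resolve_left h4

theorem liftHom_injective [Nontrivial A] (h2 : (2 : F) ≠ 0) (hc₁ : c₁ ≠ 0) (hc₂ : c₂ ≠ 0)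
    (q : Basis A c₁ 0 c₂) : Function.Injective q.liftHom := by
  rw [injective_iff_map_eq_zero]
  intro x hx
  have hre (y : ℍ[F,c₁,c₂]) : (x * y).re = 0 :=
    q.re_eq_zero_of_liftHom_eq_zero h2 hc₁ hc₂ (by rw [map_mul, hx, zero_mul])
  have h1 := hre 1
  have hI := hre (Basis.self F).i
  have hJ := hre (Basis.self F).j
  have hK := hre (Basis.self F).k
  simp [hc₁, hc₂] at h1 hI hJ hK
  ext <;> assumption

theorem liftHom_surjective (h2 : (2 : F) ≠ 0) (hc₁ : c₁ ≠ 0) (hc₂ : c₂ ≠ 0)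
    (hA : Module.finrank F A = 4) (q : Basis A c₁ 0 c₂) : Function.Surjective q.liftHom := by
  have : Module.Finite F A := Module.finite_of_finrank_pos (by omega)
  have : Nontrivial A := Module.nontrivial_of_finrank_pos (R := F) (by omega)
  exact (LinearMap.injective_iff_surjective_of_finrank_eq_finrank (f := q.liftHom.toLinearMap)
    (by rw [finrank_eq_four, hA])).mp (q.liftHom_injective h2 hc₁ hc₂)

end Field

def ofSqrtNegOne {R : Type*} [CommRing R] {b c ι y z δ : R} (hι : ι ^ 2 = -1)
    (h : c * y ^ 2 + b * z ^ 2 = δ) : Basis ℍ[R,c,b] (b * c) 0 δ where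
  i := ⟨0, 0, 0, ι⟩
  i_mul_i := by ext <;> simp; linear_combination (-(b * c)) * hι
  j := ⟨0, y, z, 0⟩
  j_mul_j := by ext <;> simp [← h] <;> ring
  k := ⟨0, ι * z * b, -(ι * y * c), 0⟩
  i_mul_j := by ext <;> simp <;> ring
  j_mul_i := by ext <;> simp <;> ring

section TensorProduct

open Algebra.TensorProduct

variable {F A B : Type*} [Field F] [Ring A] [Algebra F A] [Ring B] [Algebra F B] {α β γ : F}
  (P : Basis A α 0 (β * γ)) (M : Basis B 1 0 γ)

def tensorLeft (hγ : γ ≠ 0) : Basis (A ⊗[F] B) α 0 β where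
  i := P.i ⊗ₜ 1
  i_mul_i := by simp [one_def, TensorProduct.smul_tmul']
  j := P.j ⊗ₜ (γ⁻¹ • M.j)
  j_mul_j := by
    simp only [tmul_mul_tmul, P.j_mul_j, smul_mul_smul, M.j_mul_j, smul_smul, one_def,
      ← TensorProduct.smul_tmul, TensorProduct.smul_tmul']
    congr 1
    field_simp
  k := P.k ⊗ₜ (γ⁻¹ • M.j)
  i_mul_j := by simp
  j_mul_i := by simp [TensorProduct.neg_tmul]

def tensorRight : Basis (A ⊗[F] B) α 0 γ where
  i := P.i ⊗ₜ M.i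
  i_mul_i := by simp [one_def, TensorProduct.smul_tmul']
  j := 1 ⊗ₜ M.j
  j_mul_j := by simp [one_def, TensorProduct.smul_tmul']
  k := P.i ⊗ₜ M.k
  i_mul_j := by simp
  j_mul_i := by simp [TensorProduct.tmul_neg]

theorem commute_tensorLeft_tensorRight (hγ : γ ≠ 0) (x : ℍ[F,α,β]) (y : ℍ[F,α,γ]) :
    Commute ((P.tensorLeft M hγ).liftHom x) ((P.tensorRight M).liftHom y) := by
  refine commute_liftHom _ _ ?_ ?_ ?_ ?_ x y <;>
    simp [tensorLeft, tensorRight, Commute, SemiconjBy, TensorProduct.neg_tmul,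
      TensorProduct.tmul_neg]

def tensorLift (hγ : γ ≠ 0) : ℍ[F,α,β] ⊗[F] ℍ[F,α,γ] →ₐ[F] A ⊗[F] B :=
  Algebra.TensorProduct.lift _ _ (P.commute_tensorLeft_tensorRight M hγ)

theorem tensorLift_tmul (hγ : γ ≠ 0) (x : ℍ[F,α,β]) (y : ℍ[F,α,γ]) :
    P.tensorLift M hγ (x ⊗ₜ y) = (P.tensorLeft M hγ).liftHom x * (P.tensorRight M).liftHom y :=
  lift_tmul _ _ _ x y

theorem tensorLift_surjective (hα : α ≠ 0) (hγ : γ ≠ 0) (hP : Function.Surjective P.liftHom)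
    (hM : Function.Surjective M.liftHom) : Function.Surjective (P.tensorLift M hγ) := by
  set S := (P.tensorLift M hγ).range
  have hleft (x : ℍ[F,α,β]) : (P.tensorLeft M hγ).liftHom x ∈ S := by
    simpa only [tensorLift_tmul, map_one, mul_one] using
      (P.tensorLift M hγ).mem_range_self (x ⊗ₜ 1)
  have hright (y : ℍ[F,α,γ]) : (P.tensorRight M).liftHom y ∈ S := by
    simpa only [tensorLift_tmul, map_one, one_mul] using
      (P.tensorLift M hγ).mem_range_self (1 ⊗ₜ y)
  have hLi : (P.tensorLeft M hγ).i ∈ S := by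
    simpa only [liftHom_self_i] using hleft (Basis.self F).i
  have hLj : (P.tensorLeft M hγ).j ∈ S := by
    simpa only [liftHom_self_j] using hleft (Basis.self F).j
  have hRi : (P.tensorRight M).i ∈ S := by
    simpa only [liftHom_self_i] using hright (Basis.self F).i
  have hRj : (P.tensorRight M).j ∈ S := by
    simpa only [liftHom_self_j] using hright (Basis.self F).j
  have hPj : P.j ⊗ₜ[F] (1 : B) ∈ S := by
    have h : (P.tensorLeft M hγ).j * (P.tensorRight M).j = P.j ⊗ₜ[F] (1 : B) := by
      change P.j ⊗ₜ (γ⁻¹ • M.j) * (1 ⊗ₜ M.j) = _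
      rw [tmul_mul_tmul, mul_one, smul_mul_assoc, M.j_mul_j, smul_smul, inv_mul_cancel₀ hγ,
        one_smul]
    exact h ▸ mul_mem hLj hRj
  have hMi : (1 : A) ⊗ₜ[F] M.i ∈ S := by
    have h : α⁻¹ • ((P.tensorLeft M hγ).i * (P.tensorRight M).i) = (1 : A) ⊗ₜ[F] M.i := by
      change α⁻¹ • (P.i ⊗ₜ 1 * P.i ⊗ₜ M.i) = _
      rw [tmul_mul_tmul, one_mul, P.i_mul_i, zero_smul, add_zero, ← TensorProduct.smul_tmul',
        smul_smul, inv_mul_cancel₀ hα, one_smul]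
    exact h ▸ Subalgebra.smul_mem _ (mul_mem hLi hRi) _
  rw [← AlgHom.range_eq_top, eq_top_iff, ← Algebra.range_id, ← map_id, map_range]
  exact sup_le (range_le_of_surjective hP _ hLi hPj) (range_le_of_surjective hM _ hMi hRj)

theorem tensorLift_bijective (h2 : (2 : F) ≠ 0) (hα : α ≠ 0) (hβ : β ≠ 0) (hγ : γ ≠ 0)
    (hA : Module.finrank F A = 4) (hB : Module.finrank F B = 4) :
    Function.Bijective (P.tensorLift M hγ) := by
  have hsurj := P.tensorLift_surjective M hα hγ
    (P.liftHom_surjective h2 hα (mul_ne_zero hβ hγ) hA)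
    (M.liftHom_surjective h2 one_ne_zero hγ hB)
  have : Module.Finite F A := Module.finite_of_finrank_pos (by omega)
  have : Module.Finite F B := Module.finite_of_finrank_pos (by omega)
  have hdim : Module.finrank F (ℍ[F,α,β] ⊗[F] ℍ[F,α,γ]) = Module.finrank F (A ⊗[F] B) := by
    simp only [Module.finrank_tensorProduct, finrank_eq_four, hA, hB]
  exact ⟨(LinearMap.injective_iff_surjective_of_finrank_eq_finrank
    (f := (P.tensorLift M hγ).toLinearMap) hdim).mpr hsurj, hsurj⟩

end TensorProduct

end Basis

end QuaternionAlgebra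

def Matrix.quaternionBasis {R : Type*} [CommRing R] (γ : R) :
    QuaternionAlgebra.Basis (Matrix (Fin 2) (Fin 2) R) 1 0 γ where
  i := !![1, 0; 0, -1]
  i_mul_i := by ext i j; fin_cases i <;> fin_cases j <;> simp
  j := !![0, γ; 1, 0]
  j_mul_j := by ext i j; fin_cases i <;> fin_cases j <;> simp
  k := !![0, γ; -1, 0]
  i_mul_j := by ext i j; fin_cases i <;> fin_cases j <;> simp
  j_mul_i := by ext i j; fin_cases i <;> fin_cases j <;> simp

/-- Let `F` be a field of characteristic ≠ 2 containing `i` and `s` with `i² = −1`,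
`s² = a ≠ 0`. Let `b, c, x₀, x₁, x₂, x₄ ∈ F` satisfy `bc ≠ 0`, `x₀ + x₁ ≠ 0`,
`ax₀² + x₂² ≠ 0`, `ix₁ + x₂ ≠ 0` and `ax₀² + bx₁² + x₂² + cx₄² = 0`. Set
`f = (2aix₀ + 2sx₂)(2ix₁ + 2x₂)/(x₀+x₁)²` and `g = (−2aix₀ + 2sx₂)(2ix₁ + 2x₂)/(x₀+x₁)²`.
Then `f` and `g` are nonzero and `[(bc, f)] + [(bc, g)] = [(c, b)]` in `Br F`;
equivalently (comparing dimensions of central simple algebras)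
`(bc,f) ⊗ (bc,g) ≅ M₂((c,b))` as `F`-algebras. -/
theorem quaternion_sum_class (F : Type) [Field F] (h2 : (2 : F) ≠ 0)
    (i s a : F) (hi : i ^ 2 = -1) (hs : s ^ 2 = a) (ha : a ≠ 0)
    (b c x₀ x₁ x₂ x₄ : F) (hbc : b * c ≠ 0) (hx01 : x₀ + x₁ ≠ 0)
    (hax : a * x₀ ^ 2 + x₂ ^ 2 ≠ 0) (hix : i * x₁ + x₂ ≠ 0)
    (hrel : a * x₀ ^ 2 + b * x₁ ^ 2 + x₂ ^ 2 + c * x₄ ^ 2 = 0) :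
    (2 * a * i * x₀ + 2 * s * x₂) * (2 * i * x₁ + 2 * x₂) / (x₀ + x₁) ^ 2 ≠ 0 ∧
    (-(2 * a * i * x₀) + 2 * s * x₂) * (2 * i * x₁ + 2 * x₂) / (x₀ + x₁) ^ 2 ≠ 0 ∧
    Nonempty
      ((ℍ[F, b * c, (2 * a * i * x₀ + 2 * s * x₂) * (2 * i * x₁ + 2 * x₂) / (x₀ + x₁) ^ 2] ⊗[F]
          ℍ[F, b * c, (-(2 * a * i * x₀) + 2 * s * x₂) * (2 * i * x₁ + 2 * x₂) / (x₀ + x₁) ^ 2])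
        ≃ₐ[F] Matrix (Fin 2) (Fin 2) ℍ[F, c, b]) := by
  set f := (2 * a * i * x₀ + 2 * s * x₂) * (2 * i * x₁ + 2 * x₂) / (x₀ + x₁) ^ 2
  set g := (-(2 * a * i * x₀) + 2 * s * x₂) * (2 * i * x₁ + 2 * x₂) / (x₀ + x₁) ^ 2
  have hprod : (2 * a * i * x₀ + 2 * s * x₂) * (-(2 * a * i * x₀) + 2 * s * x₂) =
      4 * a * (a * x₀ ^ 2 + x₂ ^ 2) := by
    linear_combination (4 * x₂ ^ 2) * hs - (4 * a ^ 2 * x₀ ^ 2) * hi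
  have h4 : (4 : F) ≠ 0 := by
    rw [show (4 : F) = 2 * 2 by norm_num]
    exact mul_ne_zero h2 h2
  obtain ⟨hf₁, hg₁⟩ := mul_ne_zero_iff.mp (hprod ▸ mul_ne_zero (mul_ne_zero h4 ha) hax)
  have hix₂ : 2 * i * x₁ + 2 * x₂ ≠ 0 := by
    rw [show 2 * i * x₁ + 2 * x₂ = 2 * (i * x₁ + x₂) by ring]
    exact mul_ne_zero h2 hix
  have hf : f ≠ 0 := div_ne_zero (mul_ne_zero hf₁ hix₂) (pow_ne_zero _ hx01)
  have hg : g ≠ 0 := div_ne_zero (mul_ne_zero hg₁ hix₂) (pow_ne_zero _ hx01)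
  -- `fg = 4a (a x₀² + x₂²) (2i x₁ + 2x₂)² / (x₀ + x₁)⁴`, so `key` gives `fg = t² (b x₁² + c x₄²)`
  set t := 2 * s * i * (2 * i * x₁ + 2 * x₂) / (x₀ + x₁) ^ 2
  have key : (2 * s * i) ^ 2 * (b * x₁ ^ 2 + c * x₄ ^ 2) = 4 * a * (a * x₀ ^ 2 + x₂ ^ 2) := by
    linear_combination (4 * i ^ 2 * (b * x₁ ^ 2 + c * x₄ ^ 2)) * hs
      + 4 * a * (b * x₁ ^ 2 + c * x₄ ^ 2) * hi - 4 * a * hrel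
  have hfg : c * (t * x₄) ^ 2 + b * (t * x₁) ^ 2 = f * g := by
    simp only [t, f, g, div_eq_mul_inv]
    generalize ((x₀ + x₁) ^ 2)⁻¹ = d
    linear_combination (2 * i * x₁ + 2 * x₂) ^ 2 * d ^ 2 * (key - hprod)
  have hbij := (QuaternionAlgebra.Basis.ofSqrtNegOne hi hfg).tensorLift_bijective
    (Matrix.quaternionBasis g) h2 hbc hf hg (QuaternionAlgebra.finrank_eq_four _ _ _)
    (by simp [Module.finrank_matrix])
  exact ⟨hf, hg,
    ⟨(AlgEquiv.ofBijective _ hbij).trans (matrixEquivTensor (Fin 2) F ℍ[F,c,b]).symm⟩⟩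
end

section
/- Let K = ℚ^cycl be the maximal cyclotomic extension of ℚ, let k = K(a, b, c) be the rational function field in three variables over K, and let L = k(√a) be the quadratic extension of k obtained by adjoining an element s with s² = a. Set ε₂ = ac(b−1)(a−bc), ε₃ = abc(1−b)(a−b²c), ε₄ = b(b²c−a)(bc−a). Then: (i) for every nonempty subset S of {bc, ε₂, ε₃}, the product of the elements of S is not a square in L (equivalently, the classes of bc, ε₂, ε₃ generate a subgroup of L^×/L^{×2} isomorphic to (ℤ/2ℤ)³); (ii) ε₂·ε₃·ε₄ is a square in L; consequently each of abc (which is equivalent to bc modulo squares in L), ε₂, ε₃, ε₄ is a nonsquare in L. -/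
/-!
Every element involved lies in the image of `R = K[a, b, c]`, and `L = k(√a)` has `k`-basis
`1, √a`. Writing a square root of `g ∈ k` as `x + y√a` shows that `g` is a square in `L` only if
`g` or `a g` is a square in `k`, hence, `R` being integrally closed, only if `g` or `a g` comes
from a square of `R`. Specializing `(a, b, c) ↦ (1, 2, X)` identifies `g` with `a g`, and for
`ε₄` and each product in (i) the specialized polynomial has a simple root in `K`, so it is not a
square; `abc = (√a)² bc` is then handled by (i). For (ii), `ε₂ε₃ε₄ = -(abc(b-1)(a-bc)(a-b²c))²`,
and `-1` is a square in `ℚ^cycl`.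
-/

noncomputable section

/-- The rational function field `K(a, b, c)` in three variables over `K`. -/
abbrev RatFunc3 (K : Type) [Field K] : Type := FractionRing (MvPolynomial (Fin 3) K)

/-- The variable `a`. -/
def va (K : Type) [Field K] : RatFunc3 K :=
  algebraMap (MvPolynomial (Fin 3) K) (RatFunc3 K) (MvPolynomial.X 0)

/-- The variable `b`. -/
def vb (K : Type) [Field K] : RatFunc3 K :=
  algebraMap (MvPolynomial (Fin 3) K) (RatFunc3 K) (MvPolynomial.X 1)

/-- The variable `c`. -/
def vc (K : Type) [Field K] : RatFunc3 K :=
  algebraMap (MvPolynomial (Fin 3) K) (RatFunc3 K) (MvPolynomial.X 2)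

/-- `ε₂ = ac(b−1)(a−bc)`. -/
def eps2 (K : Type) [Field K] : RatFunc3 K :=
  va K * vc K * (vb K - 1) * (va K - vb K * vc K)

/-- `ε₃ = abc(1−b)(a−b²c)`. -/
def eps3 (K : Type) [Field K] : RatFunc3 K :=
  va K * vb K * vc K * (1 - vb K) * (va K - vb K ^ 2 * vc K)

/-- `ε₄ = b(b²c−a)(bc−a)`. -/
def eps4 (K : Type) [Field K] : RatFunc3 K :=
  vb K * (vb K ^ 2 * vc K - va K) * (vb K * vc K - va K)

open Polynomial

theorem IsIntegrallyClosed.isSquare_of_isSquare_algebraMap {R F : Type*} [CommRing R]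
    [CommRing F] [Algebra R F] [IsFractionRing R F] [IsIntegrallyClosed R] {f : R}
    (h : IsSquare (algebraMap R F f)) : IsSquare f := by
  obtain ⟨u, hu⟩ := h
  obtain ⟨r, hr⟩ := IsIntegrallyClosed.exists_algebraMap_eq_of_isIntegral_pow (R := R) two_pos
    (by rw [sq, ← hu]; exact isIntegral_algebraMap : IsIntegral R (u ^ 2))
  exact ⟨r, IsFractionRing.injective R F (by rw [map_mul, hr, hu])⟩

theorem Polynomial.not_isSquare_of_isRoot_of_eval_derivative_ne_zero {R : Type*} [CommRing R]
    [NoZeroDivisors R] {f : R[X]} {r : R} (h0 : f.IsRoot r) (h1 : f.derivative.eval r ≠ 0) :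
    ¬ IsSquare f := by
  rintro ⟨q, rfl⟩
  have hq : q.eval r = 0 := mul_self_eq_zero.mp (by simpa using h0)
  exact h1 (by simp [derivative_mul, hq])

theorem IsPrimitiveRoot.isSquare_neg_one {R : Type*} [CommRing R] [NoZeroDivisors R] {ζ : R}
    (h : IsPrimitiveRoot ζ 4) : IsSquare (-1 : R) :=
  ⟨ζ, by rw [← sq, (h.pow_of_dvd two_ne_zero (by norm_num)).eq_neg_one_of_two_right]⟩

section QuadraticExtension

variable {F E : Type*} [Field F] [Field E] [Algebra F E] {a : F} {s : E}

theorem linearIndependent_one_of_sq_eq_algebraMap (hs : s ^ 2 = algebraMap F E a)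
    (ha : ¬ IsSquare a) : LinearIndependent F ![1, s] := by
  rw [LinearIndependent.pair_iff]
  intro x y hxy
  obtain rfl : y = 0 := by
    by_contra hy
    have hys : algebraMap F E x + algebraMap F E y * s = 0 := by
      simpa [Algebra.smul_def] using hxy
    refine ha ⟨x / y, (algebraMap F E).injective ?_⟩
    have hy' : algebraMap F E y ≠ 0 := by simpa using hy
    rw [map_mul, map_div₀, ← hs]
    field_simp
    linear_combination (algebraMap F E y * s - algebraMap F E x) * hys
  simpa using hxy

theorem exists_eq_add_mul_of_finrank_eq_two (hrank : Module.finrank F E = 2)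
    (hs : s ^ 2 = algebraMap F E a) (ha : ¬ IsSquare a) (u : E) :
    ∃ x y : F, u = algebraMap F E x + algebraMap F E y * s := by
  let b := basisOfLinearIndependentOfCardEqFinrank
    (linearIndependent_one_of_sq_eq_algebraMap hs ha) (by simp [hrank])
  refine ⟨b.repr u 0, b.repr u 1, ?_⟩
  simpa [b, Fin.sum_univ_two, Algebra.smul_def] using (b.sum_repr u).symm

theorem isSquare_or_isSquare_mul_of_isSquare_algebraMap [NeZero (2 : F)]
    (hrank : Module.finrank F E = 2) (hs : s ^ 2 = algebraMap F E a) (ha : ¬ IsSquare a) {g : F}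
    (hg : IsSquare (algebraMap F E g)) : IsSquare g ∨ IsSquare (a * g) := by
  obtain ⟨u, hu⟩ := hg
  obtain ⟨x, y, rfl⟩ := exists_eq_add_mul_of_finrank_eq_two hrank hs ha u
  obtain ⟨hg, hxy⟩ : x * x + a * (y * y) - g = 0 ∧ 2 * x * y = 0 := by
    refine (linearIndependent_one_of_sq_eq_algebraMap hs ha).eq_zero_of_pair ?_
    simp only [Algebra.smul_def, map_sub, map_add, map_mul, map_ofNat, hu]
    linear_combination -(algebraMap F E y * algebraMap F E y) * hs
  rcases mul_eq_zero.mp hxy with hx | rfl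
  · right
    rw [mul_eq_zero_iff_left two_ne_zero] at hx
    subst hx
    exact ⟨a * y, by linear_combination -a * hg⟩
  · left
    exact ⟨x, by linear_combination -hg⟩

end QuadraticExtension

section RationalFunctionField

open MvPolynomial (X)

variable {K : Type} [Field K] {L : Type} [Field L] [Algebra (RatFunc3 K) L]

theorem not_isSquare_va : ¬ IsSquare (va K) := fun h =>
  MvPolynomial.X_prime.not_isSquare (IsIntegrallyClosed.isSquare_of_isSquare_algebraMap h)

theorem eps2_mul_eps3_mul_eps4 :
    eps2 K * eps3 K * eps4 K = -(va K * vb K * vc K * (vb K - 1) * (va K - vb K * vc K) *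
      (va K - vb K ^ 2 * vc K)) ^ 2 := by
  simp only [eps2, eps3, eps4]
  ring

theorem isSquare_algebraMap_eps2_mul_eps3_mul_eps4 (hK : IsSquare (-1 : K)) :
    IsSquare (algebraMap (RatFunc3 K) L (eps2 K * eps3 K * eps4 K)) := by
  have hL : IsSquare (-1 : L) := by
    simpa using hK.map ((algebraMap (RatFunc3 K) L).comp (algebraMap K (RatFunc3 K)))
  rw [eps2_mul_eps3_mul_eps4, neg_eq_neg_one_mul, map_mul, map_neg, map_one, map_pow]
  exact hL.mul (.sq _)

def specialization : MvPolynomial (Fin 3) K →ₐ[K] K[X] :=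
  MvPolynomial.aeval ![1, 2, Polynomial.X]

@[simp] theorem specialization_X_zero : specialization (X 0 : MvPolynomial (Fin 3) K) = 1 := by
  simp [specialization]

@[simp] theorem specialization_X_one : specialization (X 1 : MvPolynomial (Fin 3) K) = 2 := by
  simp [specialization]

@[simp] theorem specialization_X_two :
    specialization (X 2 : MvPolynomial (Fin 3) K) = Polynomial.X := by
  simp [specialization]

variable [CharZero K] {s : L}

theorem not_isSquare_of_specialization_isRoot (hs : s ^ 2 = algebraMap (RatFunc3 K) L (va K))
    (hrank : Module.finrank (RatFunc3 K) L = 2) {P : MvPolynomial (Fin 3) K} {r : K}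
    (hr : (specialization P).IsRoot r ∧ (specialization P).derivative.eval r ≠ 0) :
    ¬ IsSquare (algebraMap (RatFunc3 K) L (algebraMap _ _ P)) := by
  have hP : ¬ IsSquare (specialization P) :=
    Polynomial.not_isSquare_of_isRoot_of_eval_derivative_ne_zero hr.1 hr.2
  have haP : specialization (X 0 * P) = specialization P := by simp
  intro hsq
  rcases isSquare_or_isSquare_mul_of_isSquare_algebraMap hrank hs not_isSquare_va hsq with h | h
  · exact hP ((IsIntegrallyClosed.isSquare_of_isSquare_algebraMap h).map specialization)
  · rw [va, ← map_mul] at h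
    exact hP (haP ▸ (IsIntegrallyClosed.isSquare_of_isSquare_algebraMap h).map specialization)

theorem not_isSquare_prod_bc_eps2_eps3 (hs : s ^ 2 = algebraMap (RatFunc3 K) L (va K))
    (hrank : Module.finrank (RatFunc3 K) L = 2) (S : Finset (Fin 3)) (hS : S.Nonempty) :
    ¬ IsSquare (∏ i ∈ S,
      ![algebraMap (RatFunc3 K) L (vb K * vc K),
        algebraMap (RatFunc3 K) L (eps2 K),
        algebraMap (RatFunc3 K) L (eps3 K)] i) := by
  have hvec : ![algebraMap (RatFunc3 K) L (vb K * vc K), algebraMap (RatFunc3 K) L (eps2 K),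
      algebraMap (RatFunc3 K) L (eps3 K)] = fun i => algebraMap (RatFunc3 K) L (algebraMap _ _
        (![(X 1 * X 2 : MvPolynomial (Fin 3) K), X 0 * X 2 * (X 1 - 1) * (X 0 - X 1 * X 2),
          X 0 * X 1 * X 2 * (1 - X 1) * (X 0 - X 1 ^ 2 * X 2)] i)) := by
    ext i
    fin_cases i <;> simp [va, vb, vc, eps2, eps3]
  rw [hvec, ← map_prod, ← map_prod, ← Fintype.prod_ite_mem, Fin.prod_univ_three]
  -- the cases come in the order `S = {0,1,2}, {0,1}, {0,2}, {0}, {1,2}, {1}, {2}, ∅`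
  by_cases h0 : 0 ∈ S <;> by_cases h1 : 1 ∈ S <;> by_cases h2 : 2 ∈ S <;>
    simp only [h0, h1, h2, if_true, if_false, one_mul, mul_one, Matrix.cons_val]
  · exact not_isSquare_of_specialization_isRoot hs hrank (r := 1 / 2)
      (by norm_num [derivative_mul])
  · exact not_isSquare_of_specialization_isRoot hs hrank (r := 1 / 2)
      (by norm_num [derivative_mul])
  · exact not_isSquare_of_specialization_isRoot hs hrank (r := 1 / 4)
      (by norm_num [derivative_mul])
  · exact not_isSquare_of_specialization_isRoot hs hrank (r := 0)
      (by norm_num [derivative_mul])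
  · exact not_isSquare_of_specialization_isRoot hs hrank (r := 1 / 2)
      (by norm_num [derivative_mul])
  · exact not_isSquare_of_specialization_isRoot hs hrank (r := 0)
      (by norm_num [derivative_mul])
  · exact not_isSquare_of_specialization_isRoot hs hrank (r := 0)
      (by norm_num [derivative_mul])
  · obtain ⟨i, hi⟩ := hS
    fin_cases i <;> contradiction

theorem not_isSquare_algebraMap_eps4 (hs : s ^ 2 = algebraMap (RatFunc3 K) L (va K))
    (hrank : Module.finrank (RatFunc3 K) L = 2) :
    ¬ IsSquare (algebraMap (RatFunc3 K) L (eps4 K)) := by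
  have h4 : eps4 K = algebraMap _ _
      ((X 1 * (X 1 ^ 2 * X 2 - X 0) * (X 1 * X 2 - X 0) : MvPolynomial (Fin 3) K)) := by
    simp [eps4, va, vb, vc]
  rw [h4]
  exact not_isSquare_of_specialization_isRoot hs hrank (r := 1 / 2) (by norm_num [derivative_mul])

end RationalFunctionField

/-- Over `L = k(√a)`, where `k = ℚ^cycl(a, b, c)`: (i) the product of the elements of
any nonempty subset of `{bc, ε₂, ε₃}` is a nonsquare in `L` (so they generate a
subgroup `(ℤ/2ℤ)³` of `L^×/L^{×2}`); (ii) `ε₂ε₃ε₄` is a square in `L`; consequently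
each of `abc` (which is equivalent to `bc` modulo squares in `L`), `ε₂`, `ε₃`, `ε₄` is
a nonsquare in `L`. Here `L` is pinned down as a degree-2 extension of `k` containing
a square root `s` of `a`. -/
theorem square_classes_over_L (K : Type) [Field K] [Algebra ℚ K]
    [IsCyclotomicExtension Set.univ ℚ K]
    (L : Type) [Field L] [Algebra (RatFunc3 K) L] (s : L)
    (hs : s ^ 2 = algebraMap (RatFunc3 K) L (va K))
    (hrank : Module.finrank (RatFunc3 K) L = 2) :
    (∀ S : Finset (Fin 3), S.Nonempty →
      ¬ IsSquare (∏ i ∈ S,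
        ![algebraMap (RatFunc3 K) L (vb K * vc K),
          algebraMap (RatFunc3 K) L (eps2 K),
          algebraMap (RatFunc3 K) L (eps3 K)] i)) ∧
    IsSquare (algebraMap (RatFunc3 K) L (eps2 K * eps3 K * eps4 K)) ∧
    (∃ t : L, algebraMap (RatFunc3 K) L (va K * vb K * vc K) =
      t ^ 2 * algebraMap (RatFunc3 K) L (vb K * vc K)) ∧
    ¬ IsSquare (algebraMap (RatFunc3 K) L (va K * vb K * vc K)) ∧
    ¬ IsSquare (algebraMap (RatFunc3 K) L (eps2 K)) ∧
    ¬ IsSquare (algebraMap (RatFunc3 K) L (eps3 K)) ∧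
    ¬ IsSquare (algebraMap (RatFunc3 K) L (eps4 K)) := by
  have : CharZero K := algebraRat.charZero K
  obtain ⟨ζ, hζ⟩ := IsCyclotomicExtension.exists_isPrimitiveRoot ℚ K (Set.mem_univ 4) four_ne_zero
  have hprod := not_isSquare_prod_bc_eps2_eps3 hs hrank
  have habc : algebraMap (RatFunc3 K) L (va K * vb K * vc K) =
      s ^ 2 * algebraMap (RatFunc3 K) L (vb K * vc K) := by
    rw [hs, ← map_mul, mul_assoc]
  have hs0 : s ^ 2 ≠ 0 := by
    rw [hs, _root_.map_ne_zero]
    exact fun h => not_isSquare_va (h ▸ IsSquare.zero)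
  refine ⟨hprod, isSquare_algebraMap_eps2_mul_eps3_mul_eps4 hζ.isSquare_neg_one, ⟨s, habc⟩,
    fun h => ?_, by simpa using hprod {1} (Finset.singleton_nonempty 1),
    by simpa using hprod {2} (Finset.singleton_nonempty 2), not_isSquare_algebraMap_eps4 hs hrank⟩
  refine hprod {0} (Finset.singleton_nonempty 0) ?_
  simpa [habc, hs0] using h.div (.sq s)
end
end

section
/- Let K = ℚ^cycl be the maximal cyclotomic extension of ℚ, k = K(a, b, c) the rational function field in three variables over K, and L = k(√a). Set ε₀ = ε₁ = abc, ε₂ = ac(b−1)(a−bc), ε₃ = abc(1−b)(a−b²c), ε₄ = b(b²c−a)(bc−a). Then ε₀·ε₁ = (abc)² is a square in L, while for every pair of indices i < j in {0,1,2,3,4} with {i,j} ≠ {0,1}, the product εᵢ·εⱼ is not a square in L. -/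
noncomputable section

/-- The five discriminants `ε₀ = ε₁ = abc`, `ε₂`, `ε₃`, `ε₄` of the degeneracy locus. -/
def epsFam (K : Type) [Field K] : Fin 5 → RatFunc3 K :=
  ![va K * vb K * vc K, va K * vb K * vc K, eps2 K, eps3 K, eps4 K]

/-! Since `L = k(√a)` has degree 2 over `k` and `2 ≠ 0`, an element `x ∈ k` is a square in `L`
only if `x` or `a x` is a square in `k`. Every product `εᵢεⱼ` other than `ε₀ε₁` is divisible
exactly once by one of the primes `b`, `c`, `b - 1` of `K[a, b, c]`, and so is `a εᵢεⱼ`; as the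
polynomial ring is integrally closed, neither is a square in `k`. Exact divisibility is
witnessed by a point of `K³` where the prime vanishes but neither the cofactor nor `a` does. -/

open MvPolynomial

theorem MvPolynomial.prime_X_sub_C {σ R : Type*} [CommRing R] [IsDomain R] [DecidableEq σ]
    (i : σ) (r : R) : Prime (X i - C r : MvPolynomial σ R) := by
  let e : MvPolynomial σ R ≃+* Polynomial (MvPolynomial {j // j ≠ i} R) :=
    (renameEquiv R (Equiv.optionSubtypeNe i).symm).toRingEquiv.trans
      (optionEquivLeft R _).toRingEquiv
  have he : e (X i - C r) = Polynomial.X - Polynomial.C (C r) := by simp [e]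
  exact (MulEquiv.prime_iff e.toMulEquiv).mp (he ▸ Polynomial.prime_X_sub_C _)

theorem Prime.not_isSquare_mul {M : Type*} [CommMonoidWithZero M] [IsCancelMulZero M] {p q : M}
    (hp : Prime p) (hq : ¬ p ∣ q) : ¬ IsSquare (p * q) := by
  rintro ⟨m, hm⟩
  obtain ⟨n, rfl⟩ : p ∣ m := hp.dvd_of_dvd_pow (n := 2) ⟨q, by rw [sq, ← hm]⟩
  exact hq ⟨n * n, mul_left_cancel₀ hp.ne_zero (by rw [hm]; ac_rfl)⟩

theorem not_isSquare_algebraMap_of_not_isSquare {R F : Type*} [CommRing R] [IsDomain R]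
    [IsIntegrallyClosed R] [Field F] [Algebra R F] [IsFractionRing R F] {r : R}
    (hr : ¬ IsSquare r) : ¬ IsSquare (algebraMap R F r) := by
  rintro ⟨y, hy⟩
  have hint : IsIntegral R y :=
    ⟨Polynomial.X ^ 2 - Polynomial.C r, Polynomial.monic_X_pow_sub_C r two_ne_zero, by
      simp [sq, ← hy]⟩
  obtain ⟨m, rfl⟩ := IsIntegrallyClosed.isIntegral_iff.mp hint
  exact hr ⟨m, IsFractionRing.injective R F (by rw [hy, map_mul])⟩

theorem isSquare_or_isSquare_mul_of_isSquare_algebraMap_s13 {F L : Type*} [Field F] [Field L]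
    [Algebra F L] (h2 : (2 : F) ≠ 0) (hrank : Module.finrank F L = 2) {s : L} {d : F}
    (hs : s ^ 2 = algebraMap F L d) (hd : ¬ IsSquare d) {x : F}
    (hx : IsSquare (algebraMap F L x)) : IsSquare x ∨ IsSquare (d * x) := by
  have : FiniteDimensional F L := Module.finite_of_finrank_eq_succ hrank
  have hli : LinearIndependent F ![1, s] := by
    refine (LinearIndependent.pair_iff' one_ne_zero).mpr fun w hw => hd ⟨w, ?_⟩
    apply (algebraMap F L).injective
    rw [← hs, ← hw, Algebra.smul_def, mul_one, map_mul, sq]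
  have hspan := hli.span_eq_top_of_card_eq_finrank' (by simp [hrank])
  obtain ⟨t, ht⟩ := hx
  obtain ⟨u, v, rfl⟩ := Submodule.mem_span_pair.mp
    (by rw [← Matrix.range_cons_cons_empty, hspan]; trivial : t ∈ Submodule.span F {1, s})
  obtain ⟨hx, huv⟩ :=
    LinearIndependent.pair_iff.mp hli (u * u + d * (v * v) - x) (2 * (u * v)) (by
      simp only [Algebra.smul_def, map_sub, map_add, map_mul, map_ofNat] at ht ⊢
      linear_combination -(algebraMap F L v * algebraMap F L v) * hs - ht)
  obtain rfl | rfl := mul_eq_zero.mp ((mul_eq_zero.mp huv).resolve_left h2)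
  · exact .inr ⟨d * v, by linear_combination -d * hx⟩
  · exact .inl ⟨u, by linear_combination -hx⟩

theorem not_isSquare_algebraMap_mul_of_eval {σ K F : Type*} [Field K] [Field F]
    [Algebra (MvPolynomial σ K) F] [IsFractionRing (MvPolynomial σ K) F]
    {π Q : MvPolynomial σ K} (hπ : Prime π) (v : σ → K) (hπv : eval v π = 0)
    (hQv : eval v Q ≠ 0) : ¬ IsSquare (algebraMap (MvPolynomial σ K) F (π * Q)) :=
  not_isSquare_algebraMap_of_not_isSquare <| hπ.not_isSquare_mul fun h =>
    hQv (zero_dvd_iff.mp (hπv ▸ map_dvd (eval v) h))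

def epsPoly (K : Type) [Field K] : Fin 5 → MvPolynomial (Fin 3) K :=
  ![X 0 * X 1 * X 2, X 0 * X 1 * X 2, X 0 * X 2 * (X 1 - 1) * (X 0 - X 1 * X 2),
    X 0 * X 1 * X 2 * (1 - X 1) * (X 0 - X 1 ^ 2 * X 2),
    X 1 * (X 1 ^ 2 * X 2 - X 0) * (X 1 * X 2 - X 0)]

theorem algebraMap_epsPoly (K : Type) [Field K] (i : Fin 5) :
    algebraMap (MvPolynomial (Fin 3) K) (RatFunc3 K) (epsPoly K i) = epsFam K i := by
  fin_cases i <;> simp [epsPoly, epsFam, eps2, eps3, eps4, va, vb, vc]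

section QuadraticExtension

variable {K : Type} [Field K] [CharZero K] {L : Type} [Field L] [Algebra (RatFunc3 K) L] {s : L}

theorem not_isSquare_algebraMap_of_eq_prime_mul (hs : s ^ 2 = algebraMap (RatFunc3 K) L (va K))
    (hrank : Module.finrank (RatFunc3 K) L = 2) {P π Q : MvPolynomial (Fin 3) K}
    (hP : P = π * Q) (hπ : Prime π) (v : Fin 3 → K) (hπv : eval v π = 0) (hQv : eval v Q ≠ 0)
    (hv : v 0 ≠ 0) :
    ¬ IsSquare (algebraMap (RatFunc3 K) L (algebraMap (MvPolynomial (Fin 3) K) _ P)) := by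
  have hva : ¬ IsSquare (va K) :=
    not_isSquare_algebraMap_of_not_isSquare (X_prime (R := K) (i := (0 : Fin 3))).not_isSquare
  intro hsq
  rcases isSquare_or_isSquare_mul_of_isSquare_algebraMap_s13 two_ne_zero hrank hs hva hsq with h | h
  · exact not_isSquare_algebraMap_mul_of_eval (F := RatFunc3 K) hπ v hπv hQv (hP ▸ h)
  · refine not_isSquare_algebraMap_mul_of_eval (F := RatFunc3 K) hπ (Q := X 0 * Q) v hπv
      (by simp [hv, hQv]) ?_
    rwa [mul_left_comm, map_mul, ← hP]

theorem not_isSquare_algebraMap_epsPoly_mul (hs : s ^ 2 = algebraMap (RatFunc3 K) L (va K))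
    (hrank : Module.finrank (RatFunc3 K) L = 2) {i j : Fin 5} (hij : i < j)
    (hne : ¬(i = 0 ∧ j = 1)) :
    ¬ IsSquare (algebraMap (RatFunc3 K) L
      (algebraMap (MvPolynomial (Fin 3) K) _ (epsPoly K i * epsPoly K j))) := by
  have h02 := not_isSquare_algebraMap_of_eq_prime_mul hs hrank
    (P := epsPoly K 0 * epsPoly K 2) (π := X 1) (Q := X 0 * X 2 * epsPoly K 2)
    (by simp [epsPoly]; ring) X_prime ![1, 0, 1] (by simp) (by simp [epsPoly]) (by simp)
  have h03 := not_isSquare_algebraMap_of_eq_prime_mul hs hrank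
    (P := epsPoly K 0 * epsPoly K 3) (π := X 1 - 1)
    (Q := -(X 0 * X 1 * X 2) ^ 2 * (X 0 - X 1 ^ 2 * X 2)) (by simp [epsPoly]; ring)
    (by simpa using prime_X_sub_C (1 : Fin 3) (1 : K)) ![2, 1, 1] (by simp)
    (by simp [Matrix.cons_val_two]; norm_num) (by simp)
  have h04 := not_isSquare_algebraMap_of_eq_prime_mul hs hrank
    (P := epsPoly K 0 * epsPoly K 4) (π := X 2) (Q := X 0 * X 1 * epsPoly K 4)
    (by simp [epsPoly]; ring) X_prime ![1, 1, 0] (by simp) (by simp [epsPoly]) (by simp)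
  have h23 := not_isSquare_algebraMap_of_eq_prime_mul hs hrank
    (P := epsPoly K 2 * epsPoly K 3) (π := X 1)
    (Q := epsPoly K 2 * (X 0 * X 2 * (1 - X 1) * (X 0 - X 1 ^ 2 * X 2)))
    (by simp [epsPoly]; ring) X_prime ![1, 0, 1] (by simp) (by simp [epsPoly]) (by simp)
  have h24 := not_isSquare_algebraMap_of_eq_prime_mul hs hrank
    (P := epsPoly K 2 * epsPoly K 4) (π := X 1)
    (Q := epsPoly K 2 * ((X 1 ^ 2 * X 2 - X 0) * (X 1 * X 2 - X 0)))
    (by simp [epsPoly]; ring) X_prime ![1, 0, 1] (by simp) (by simp [epsPoly]) (by simp)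
  have h34 := not_isSquare_algebraMap_of_eq_prime_mul hs hrank
    (P := epsPoly K 3 * epsPoly K 4) (π := X 2)
    (Q := X 0 * X 1 * (1 - X 1) * (X 0 - X 1 ^ 2 * X 2) * epsPoly K 4)
    (by simp [epsPoly]; ring) X_prime ![1, 2, 0] (by simp) (by simp [epsPoly]; norm_num)
    (by simp)
  fin_cases i <;> fin_cases j <;> try simp at hij hne
  exacts [h02, h03, h04, h02, h03, h04, h23, h24, h34]

end QuadraticExtension

theorem only_T0_T1_satisfies_star_general (K : Type) [Field K] [Algebra ℚ K]
    (L : Type) [Field L] [Algebra (RatFunc3 K) L] (s : L)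
    (hs : s ^ 2 = algebraMap (RatFunc3 K) L (va K))
    (hrank : Module.finrank (RatFunc3 K) L = 2) :
    (epsFam K 0 * epsFam K 1 = (va K * vb K * vc K) ^ 2) ∧
    IsSquare (algebraMap (RatFunc3 K) L (epsFam K 0 * epsFam K 1)) ∧
    (∀ i j : Fin 5, i < j → ¬(i = 0 ∧ j = 1) →
      ¬ IsSquare (algebraMap (RatFunc3 K) L (epsFam K i * epsFam K j))) := by
  have : CharZero K := algebraRat.charZero K
  have e01 : epsFam K 0 * epsFam K 1 = (va K * vb K * vc K) ^ 2 := (sq _).symm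
  refine ⟨e01, ⟨algebraMap _ L (va K * vb K * vc K), by rw [e01, sq, map_mul]⟩,
    fun i j hij hne => ?_⟩
  rw [← algebraMap_epsPoly, ← algebraMap_epsPoly, ← map_mul]
  exact not_isSquare_algebraMap_epsPoly_mul hs hrank hij hne

/-- Over `L = k(√a)` with `k = ℚ^cycl(a, b, c)`: `ε₀·ε₁ = (abc)²` is a square in `L`,
while `εᵢ·εⱼ` is a nonsquare in `L` for every pair `i < j` with `{i,j} ≠ {0,1}`.
(Hence `{T₀, T₁}` is the only degree-2 subscheme of the degeneracy locus satisfying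
condition (*) over `L`.) -/
theorem only_T0_T1_satisfies_star (K : Type) [Field K] [Algebra ℚ K]
    [IsCyclotomicExtension Set.univ ℚ K]
    (L : Type) [Field L] [Algebra (RatFunc3 K) L] (s : L)
    (hs : s ^ 2 = algebraMap (RatFunc3 K) L (va K))
    (hrank : Module.finrank (RatFunc3 K) L = 2) :
    (epsFam K 0 * epsFam K 1 = (va K * vb K * vc K) ^ 2) ∧
    IsSquare (algebraMap (RatFunc3 K) L (epsFam K 0 * epsFam K 1)) ∧
    (∀ i j : Fin 5, i < j → ¬(i = 0 ∧ j = 1) →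
      ¬ IsSquare (algebraMap (RatFunc3 K) L (epsFam K i * epsFam K j))) :=
  only_T0_T1_satisfies_star_general K L s hs hrank

end
end
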